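/- Let (X, σ) be a subshift on a countable alphabet, let G = {log g_n}_{n≥1} be an almost-additive sequence on X with tempered variation, and let F = {log f_n}_{n≥1} be a sequence on X satisfying (C1), (D2) and (D3). Then the sequence H := {log (f_n/g_n)}_{n≥1} satisfies (C1), (D2) and (D3). -/

import Mathlib

open Filter Topology MeasureTheory
open scoped ENNReal

namespace CSS

/-- The full shift space over the countable alphabet `ℕ`. -/
abbrev FullShift : Type := ℕ → ℕ

/-- The (one-sided) shift map. -/
def shift : FullShift → FullShift := fun x n => x (n + 1)

/-- The cylinder set determined by a word. -/
def cyl (w : List ℕ) : Set FullShift := {x | ∀ i : Fin w.length, x i.1 = w.get i}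

/-- A subshift on a countable alphabet: a closed, shift-invariant subset of the full shift. -/
def IsSubshift (X : Set FullShift) : Prop := IsClosed X ∧ shift '' X ⊆ X

/-- The word `w` is allowable for `X` (the cylinder of `w` meets `X`). -/
def Allow (X : Set FullShift) (w : List ℕ) : Prop := ∃ x ∈ X, x ∈ cyl w

/-- A word is allowed by a transition matrix `t`. -/
def WordAllowed (t : ℕ → ℕ → Prop) (w : List ℕ) : Prop :=
  ∀ i : ℕ, ∀ h : i + 1 < w.length, t (w.get ⟨i, Nat.lt_of_succ_lt h⟩) (w.get ⟨i + 1, h⟩)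

/-- The countable Markov shift determined by the transition matrix `t`. -/
def markov (t : ℕ → ℕ → Prop) : Set FullShift := {x | ∀ n, t (x n) (x (n + 1))}

/-- The transition matrix has no row and no column made entirely of zeros. -/
def NoZeroRowCol (t : ℕ → ℕ → Prop) : Prop := (∀ i, ∃ j, t i j) ∧ (∀ j, ∃ i, t i j)

/-- The Markov shift of `t` restricted to the symbols `< N`. -/
def markovRestr (t : ℕ → ℕ → Prop) (N : ℕ) : Set FullShift :=
  {x | (∀ n, t (x n) (x (n + 1))) ∧ ∀ n, x n < N}

/-- The restriction of `t` to the symbols `< N` is an irreducible matrix. -/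
def MatIrred (t : ℕ → ℕ → Prop) (N : ℕ) : Prop :=
  ∀ i < N, ∀ j < N, ∃ w : List ℕ, (∀ a ∈ w, a < N) ∧ WordAllowed t ([i] ++ w ++ [j])

/-- A subshift is irreducible. -/
def Irreducible (X : Set FullShift) : Prop :=
  ∀ u v, Allow X u → Allow X v → ∃ w, Allow X (u ++ w ++ v)

/-- The weak specification property. -/
def WeakSpec (X : Set FullShift) : Prop :=
  ∃ p : ℕ, ∀ u v, Allow X u → Allow X v → ∃ w, w.length ≤ p ∧ Allow X (u ++ w ++ v)

/-- A subshift is finitely irreducible. -/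
def FinIrreducible (X : Set FullShift) : Prop :=
  ∃ (p : ℕ) (W : Finset (List ℕ)), (∀ w ∈ W, w.length ≤ p ∧ Allow X w) ∧
    ∀ u v, Allow X u → Allow X v → ∃ w ∈ W, Allow X (u ++ w ++ v)

/-- A countable Markov shift (given by its matrix) is topologically mixing. -/
def TopMixingT (t : ℕ → ℕ → Prop) : Prop :=
  ∀ a b : ℕ, ∃ N : ℕ, ∀ n > N, ∃ w : List ℕ, w.length = n ∧ WordAllowed t w ∧
    w.head? = some a ∧ w.getLast? = some b

/-- The big images and preimages property. -/
def BIP (t : ℕ → ℕ → Prop) : Prop :=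
  ∃ S : Finset ℕ, ∀ a : ℕ, (∃ b ∈ S, t b a) ∧ (∃ b ∈ S, t a b)

/-- A countable Markov shift (given by its matrix) is finitely primitive. -/
def FinPrimitiveT (t : ℕ → ℕ → Prop) : Prop :=
  ∃ (p : ℕ) (W : Finset (List ℕ)), (∀ w ∈ W, w.length = p ∧ WordAllowed t w) ∧
    ∀ u v, WordAllowed t u → WordAllowed t v → ∃ w ∈ W, WordAllowed t (u ++ w ++ v)

/-- The one-block code induced by a map on symbols. -/
def oneBlock (φ : ℕ → ℕ) : FullShift → FullShift := fun x n => φ (x n)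

/-- The word given by the first `n` symbols of `x`. -/
def prefixWord (x : FullShift) (n : ℕ) : List ℕ := List.ofFn (fun i : Fin n => x i.1)

/-- The number of allowable words of `X` mapping to the word `v` under the one-block code. -/
noncomputable def preCount (X : Set FullShift) (φ : ℕ → ℕ) (v : List ℕ) : ℕ :=
  Set.ncard {u : List ℕ | Allow X u ∧ u.map φ = v}

/-- The sequence Φ = {log φ_n}, φ_n(y) = |π⁻¹(y₁…y_n)|. -/
noncomputable def phiSeq (X : Set FullShift) (φ : ℕ → ℕ) : ℕ → FullShift → ℝ :=
  fun n y => (preCount X φ (prefixWord y n) : ℝ)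

variable (X : Set FullShift) (f : ℕ → FullShift → ℝ)

/-- Each function of the sequence is positive on `X`. -/
def SeqPos : Prop := ∀ n, 0 < n → ∀ x ∈ X, 0 < f n x

/-- Each function of the sequence is continuous on `X`. -/
def SeqCont : Prop := ∀ n, 0 < n → ContinuousOn (f n) X

/-- `sup {f_{|w|}(x) : x ∈ [w] ∩ X}`. -/
noncomputable def supW (w : List ℕ) : ℝ := sSup (f w.length '' (X ∩ cyl w))

/-- `sup {log f_{|w|}(x) : x ∈ [w] ∩ X}`. -/
noncomputable def supLogW (w : List ℕ) : ℝ :=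
  sSup ((fun x => Real.log (f w.length x)) '' (X ∩ cyl w))

/-- The `n`-th variation of the sequence is bounded by `M`. -/
def VarBddBy (n : ℕ) (M : ℝ) : Prop :=
  ∀ x ∈ X, ∀ y ∈ X, (∀ i < n, x i = y i) → f n x ≤ M * f n y

/-- Bowen sequence with constant `M`. -/
def BowenWith (M : ℝ) : Prop := ∀ n, 0 < n → VarBddBy X f n M

/-- Bowen sequence. -/
def Bowen : Prop := ∃ M : ℝ, 0 < M ∧ BowenWith X f M

/-- Tempered variation with variation constants `Mseq`. -/
def TemperedWith (Mseq : ℕ → ℝ) : Prop :=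
  (∀ n, 0 < n → 0 < Mseq n ∧ VarBddBy X f n (Mseq n)) ∧
  Tendsto (fun n : ℕ => Real.log (Mseq n) / (n : ℝ)) atTop (𝓝 0)

/-- Tempered variation. -/
def Tempered : Prop := ∃ Mseq : ℕ → ℝ, TemperedWith X f Mseq

/-- `F + C` is sub-additive: `f_{n+m}(x) ≤ e^C f_n(x) f_m(σ^n x)`. -/
def SubAddWith (C : ℝ) : Prop :=
  ∀ n m, 0 < n → 0 < m → ∀ x ∈ X, f (n + m) x ≤ Real.exp C * (f n x * f m (shift^[n] x))

/-- Condition (C1). -/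
def CondC1 : Prop := ∃ C : ℝ, 0 ≤ C ∧ SubAddWith X f C

/-- Almost-additivity with constant `C`. -/
def AlmostAddWith (C : ℝ) : Prop :=
  ∀ n m, 0 < n → 0 < m → ∀ x ∈ X,
    Real.exp (-C) * (f n x * f m (shift^[n] x)) ≤ f (n + m) x ∧
    f (n + m) x ≤ Real.exp C * (f n x * f m (shift^[n] x))

/-- Almost-additive sequence. -/
def AlmostAdd : Prop := ∃ C : ℝ, 0 ≤ C ∧ AlmostAddWith X f C

/-- Condition (C2) with constants `D`, `p`. -/
def C2With (D : ℝ) (p : ℕ) : Prop :=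
  ∀ u v : List ℕ, 0 < u.length → 0 < v.length → Allow X u → Allow X v →
    ∃ w : List ℕ, w.length ≤ p ∧ Allow X (u ++ w ++ v) ∧
      D * (supW X f u * supW X f v) ≤ supW X f (u ++ w ++ v)

/-- Condition (C2). -/
def CondC2 : Prop := ∃ D : ℝ, 0 < D ∧ ∃ p : ℕ, C2With X f D p

/-- Condition (C2) with all connecting words of length exactly `p` (strong specification). -/
def C2StrongWith (D : ℝ) (p : ℕ) : Prop :=
  ∀ u v : List ℕ, 0 < u.length → 0 < v.length → Allow X u → Allow X v →
    ∃ w : List ℕ, w.length = p ∧ Allow X (u ++ w ++ v) ∧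
      D * (supW X f u * supW X f v) ≤ supW X f (u ++ w ++ v)

/-- Condition (C3): a finite set `W` of connecting words realizing (C2). -/
def C3With (D : ℝ) (p : ℕ) (W : Finset (List ℕ)) : Prop :=
  (∀ w ∈ W, w.length ≤ p) ∧
  ∀ u v : List ℕ, 0 < u.length → 0 < v.length → Allow X u → Allow X v →
    ∃ w ∈ W, Allow X (u ++ w ++ v) ∧
      D * (supW X f u * supW X f v) ≤ supW X f (u ++ w ++ v)

/-- Condition (C3). -/
def CondC3 : Prop := ∃ D : ℝ, 0 < D ∧ ∃ (p : ℕ) (W : Finset (List ℕ)), C3With X f D p W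

/-- The constants `D_{n,m}` are subexponential in each variable. -/
def TemperedConsts (Dnm : ℕ → ℕ → ℝ) : Prop :=
  (∀ n m, 0 < Dnm n m) ∧
  (∀ m, Tendsto (fun n : ℕ => Real.log (Dnm n m) / (n : ℝ)) atTop (𝓝 0)) ∧
  (∀ n, Tendsto (fun m : ℕ => Real.log (Dnm n m) / (m : ℝ)) atTop (𝓝 0))

/-- Condition (D2) with constants `D_{n,m}` and `p`. -/
def D2With (Dnm : ℕ → ℕ → ℝ) (p : ℕ) : Prop :=
  TemperedConsts Dnm ∧
  ∀ u v : List ℕ, 0 < u.length → 0 < v.length → Allow X u → Allow X v →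
    ∃ w : List ℕ, w.length ≤ p ∧ Allow X (u ++ w ++ v) ∧
      Dnm u.length v.length * (supW X f u * supW X f v) ≤ supW X f (u ++ w ++ v)

/-- Condition (D2). -/
def CondD2 : Prop := ∃ (Dnm : ℕ → ℕ → ℝ) (p : ℕ), D2With X f Dnm p

/-- Condition (D2) with all connecting words of length exactly `p` (strong specification). -/
def D2StrongWith (Dnm : ℕ → ℕ → ℝ) (p : ℕ) : Prop :=
  TemperedConsts Dnm ∧
  ∀ u v : List ℕ, 0 < u.length → 0 < v.length → Allow X u → Allow X v →
    ∃ w : List ℕ, w.length = p ∧ Allow X (u ++ w ++ v) ∧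
      Dnm u.length v.length * (supW X f u * supW X f v) ≤ supW X f (u ++ w ++ v)

/-- Condition (D3): a finite set `W` of connecting words realizing (D2). -/
def D3With (Dnm : ℕ → ℕ → ℝ) (p : ℕ) (W : Finset (List ℕ)) : Prop :=
  TemperedConsts Dnm ∧ (∀ w ∈ W, w.length ≤ p) ∧
  ∀ u v : List ℕ, 0 < u.length → 0 < v.length → Allow X u → Allow X v →
    ∃ w ∈ W, Allow X (u ++ w ++ v) ∧
      Dnm u.length v.length * (supW X f u * supW X f v) ≤ supW X f (u ++ w ++ v)

/-- Condition (D3). -/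
def CondD3 : Prop := ∃ (Dnm : ℕ → ℕ → ℝ) (p : ℕ) (W : Finset (List ℕ)), D3With X f Dnm p W

/-- The partition function `Z_n(F)`. -/
noncomputable def Zn (n : ℕ) : ℝ≥0∞ :=
  ∑' w : {w : List ℕ // w.length = n ∧ Allow X w}, ENNReal.ofReal (supW X f w.1)

/-- The topological pressure `P(F)`. -/
noncomputable def pressure : EReal :=
  limsup (fun n : ℕ => ((n : ℝ)⁻¹ : EReal) * ENNReal.log (Zn X f n)) atTop

/-- The Gurevich partition function `Z_n(F, a)` over periodic points starting at `a`. -/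
noncomputable def ZG (a : ℕ) (n : ℕ) : ℝ≥0∞ :=
  ∑' x : {x : FullShift // x ∈ X ∧ shift^[n] x = x ∧ x 0 = a}, ENNReal.ofReal (f n x.1)

/-- The Gurevich pressure at the symbol `a`. -/
noncomputable def gurevich (a : ℕ) : EReal :=
  limsup (fun n : ℕ => ((n : ℝ)⁻¹ : EReal) * ENNReal.log (ZG X f a n)) atTop

/-- Condition (P1) with explicit data. -/
def P1With (t : ℕ → ℕ → Prop) (l : ℕ → ℕ) (D₁ : ℝ) (p₁ : ℕ) : Prop :=
  0 < D₁ ∧ StrictMono l ∧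
    ∀ n : ℕ, MatIrred t (l n) ∧ ∃ D, D₁ ≤ D ∧ ∃ p ≤ p₁, C2With (markovRestr t (l n)) f D p

/-- Condition (P1). -/
def P1 (t : ℕ → ℕ → Prop) : Prop := ∃ (l : ℕ → ℕ) (D₁ : ℝ) (p₁ : ℕ), P1With f t l D₁ p₁

/-- A `σ`-invariant Borel probability measure supported on `X`. -/
def InvariantProb (μ : Measure FullShift) : Prop :=
  IsProbabilityMeasure μ ∧ μ X = 1 ∧ MeasurePreserving shift μ μ

/-- The entropy of the cylinder partition of length `n`. -/
noncomputable def entH (μ : Measure FullShift) (n : ℕ) : ℝ≥0∞ :=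
  ∑' w : {w : List ℕ // w.length = n}, ENNReal.ofReal (Real.negMulLog (μ (cyl w.1)).toReal)

/-- The Kolmogorov–Sinai entropy of `μ` (computed along the generating cylinder partitions). -/
noncomputable def entropy (μ : Measure FullShift) : EReal :=
  limsup (fun n : ℕ => ((n : ℝ)⁻¹ : EReal) * ((entH μ n : ℝ≥0∞) : EReal)) atTop

/-- The `EReal`-valued integral of `log g`. -/
noncomputable def elogInt (μ : Measure FullShift) (g : FullShift → ℝ) : EReal :=
  ((∫⁻ x, ENNReal.ofReal (Real.log (g x)) ∂μ : ℝ≥0∞) : EReal)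
    - ((∫⁻ x, ENNReal.ofReal (-Real.log (g x)) ∂μ : ℝ≥0∞) : EReal)

/-- The averages `(1/n) ∫ log f_n dμ`. -/
noncomputable def lyapAvg (μ : Measure FullShift) (n : ℕ) : EReal :=
  ((n : ℝ)⁻¹ : EReal) * elogInt μ (f n)

/-- `lim_n (1/n) ∫ log f_n dμ = L`. -/
def HasLyap (μ : Measure FullShift) (L : EReal) : Prop := Tendsto (lyapAvg f μ) atTop (𝓝 L)

/-- `limsup_n (1/n) ∫ log f_n dμ`. -/
noncomputable def lyapSup (μ : Measure FullShift) : EReal := limsup (lyapAvg f μ) atTop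

/-- The supremum in the variational principle (limit version). -/
noncomputable def vpLim : EReal :=
  sSup {r : EReal | ∃ (μ : Measure FullShift) (L : EReal), InvariantProb X μ ∧
    HasLyap f μ L ∧ L ≠ ⊥ ∧ r = entropy μ + L}

/-- The supremum in the variational principle (limsup version). -/
noncomputable def vpLimsup : EReal :=
  sSup {r : EReal | ∃ μ : Measure FullShift, InvariantProb X μ ∧
    lyapSup f μ ≠ ⊥ ∧ r = entropy μ + lyapSup f μ}

/-- `μ` is a Gibbs measure for the sequence `F`. -/
def IsGibbs (μ : Measure FullShift) : Prop :=
  ∃ C₀ P : ℝ, 0 < C₀ ∧ ∀ w : List ℕ, 0 < w.length → Allow X w → ∀ x ∈ X ∩ cyl w,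
    ENNReal.ofReal (C₀⁻¹ * (Real.exp (-(w.length : ℝ) * P) * f w.length x)) ≤ μ (cyl w) ∧
    μ (cyl w) ≤ ENNReal.ofReal (C₀ * (Real.exp (-(w.length : ℝ) * P) * f w.length x))

/-- `μ` is an equilibrium measure for the sequence `F`. -/
def IsEquilibrium (μ : Measure FullShift) : Prop :=
  InvariantProb X μ ∧ ∃ L : EReal, HasLyap f μ L ∧ pressure X f = entropy μ + L

/-- The `EReal`-valued sum of a real series. -/
noncomputable def esum (g : ℕ → ℝ) : EReal :=
  ((∑' i, ENNReal.ofReal (g i) : ℝ≥0∞) : EReal) - ((∑' i, ENNReal.ofReal (-g i) : ℝ≥0∞) : EReal)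

/-- A sofic shift on a finite alphabet: the image of a finite-state Markov shift
under a one-block factor map. -/
def IsFinSofic (Y : Set FullShift) : Prop :=
  ∃ (s : ℕ → ℕ → Prop) (N : ℕ) (ψ : ℕ → ℕ), Y = oneBlock ψ '' markovRestr s N

end CSS


namespace CSS

lemma shift_iter' : ∀ (k : ℕ) (x : FullShift) (i : ℕ), shift^[k] x i = x (i + k)
  | 0, _, _ => rfl
  | k+1, x, i => by
      rw [Function.iterate_succ_apply, shift_iter' k (shift x) i]; rfl

lemma mem_cyl' {w : List ℕ} {x : FullShift} :
    x ∈ cyl w ↔ ∀ i, (h : i < w.length) → x i = w[i] := by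
  constructor
  · intro H i h; simpa [List.get_eq_getElem] using H ⟨i, h⟩
  · intro H i; simpa [List.get_eq_getElem] using H i.1 i.2

lemma cyl_append_left' {u v : List ℕ} {x : FullShift} (h : x ∈ cyl (u ++ v)) : x ∈ cyl u := by
  rw [mem_cyl'] at h ⊢
  intro i hi
  have hi2 : i < (u ++ v).length := by simp; omega
  rw [h i hi2, List.getElem_append_left]

lemma cyl_append_right' {u v : List ℕ} {x : FullShift} (h : x ∈ cyl (u ++ v)) :
    shift^[u.length] x ∈ cyl v := by
  rw [mem_cyl'] at h ⊢
  intro i hi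
  have hi2 : i + u.length < (u ++ v).length := by simp; omega
  rw [shift_iter', h _ hi2]
  rw [List.getElem_append_right (by omega)]
  congr 1; omega

lemma cyl_agree' {w : List ℕ} {x y : FullShift} (hx : x ∈ cyl w) (hy : y ∈ cyl w) :
    ∀ i < w.length, x i = y i := by
  intro i hi
  rw [mem_cyl'] at hx hy
  rw [hx i hi, hy i hi]

lemma iter_mem' {X : Set FullShift} (hX : IsSubshift X) :
    ∀ (n : ℕ) {x : FullShift}, x ∈ X → shift^[n] x ∈ X
  | 0, _, hx => hx
  | n+1, x, hx => by
      rw [Function.iterate_succ_apply']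
      exact hX.2 ⟨_, iter_mem' hX n hx, rfl⟩

/-- auxiliary: `L(n+c)/n → 0` from `L j / j → 0` for nonnegative `L`. -/
lemma aux_shift_tendsto {L : ℕ → ℝ} (hL0 : ∀ j, 0 ≤ L j)
    (hL : Tendsto (fun j : ℕ => L j / j) atTop (𝓝 0)) (c : ℕ) :
    Tendsto (fun n : ℕ => L (n + c) / n) atTop (𝓝 0) := by
  have h2 : Tendsto (fun n : ℕ => 2 * (L (n + c) / (n + c : ℕ))) atTop (𝓝 0) := by
    have := (hL.comp (tendsto_add_atTop_nat c)).const_mul 2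
    simpa using this
  apply squeeze_zero_norm' _ h2
  filter_upwards [eventually_ge_atTop (max c 1)] with n hn
  have hnc : c ≤ n := le_trans (le_max_left c 1) hn
  have hn1 : 1 ≤ n := le_trans (le_max_right c 1) hn
  have hpos : (0:ℝ) < n := by exact_mod_cast hn1
  have hpos2 : (0:ℝ) < ((n + c : ℕ) : ℝ) := by push_cast; linarith
  rw [Real.norm_eq_abs, abs_of_nonneg (div_nonneg (hL0 _) hpos.le), ← mul_div_assoc,
    div_le_div_iff₀ hpos hpos2]
  have hcn : (c:ℝ) ≤ n := by exact_mod_cast hnc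
  push_cast
  nlinarith [mul_nonneg (hL0 (n + c)) (sub_nonneg.2 hcn)]

end CSS

namespace CSS

/-- If `G` is almost-additive with tempered variation and `F` satisfies
(C1), (D2), (D3), then `H = {log (f_n/g_n)}` satisfies (C1), (D2) and (D3). -/
theorem quotient_satisfies_conditions (X : Set FullShift) (hX : IsSubshift X)
    (g : ℕ → FullShift → ℝ) (hgpos : SeqPos X g) (hgcont : SeqCont X g)
    (hAA : AlmostAdd X g) (hgtemp : Tempered X g)
    (f : ℕ → FullShift → ℝ) (hfpos : SeqPos X f) (hfcont : SeqCont X f)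
    (hC1 : CondC1 X f) (hD2 : CondD2 X f) (hD3 : CondD3 X f) :
    CondC1 X (fun n x => f n x / g n x) ∧
    CondD2 X (fun n x => f n x / g n x) ∧
    CondD3 X (fun n x => f n x / g n x) := by
  classical
  obtain ⟨Cg, hCg0, hCgA⟩ := hAA
  obtain ⟨Ms, hMvar, hMlim⟩ := hgtemp
  obtain ⟨Cf, hCf0, hCfsub⟩ := hC1
  obtain ⟨D, p, W, ⟨hDpos, hDn, hDm⟩, hWlen, hmain⟩ := hD3
  -- Part 1 : condition (C1) for the quotient
  have hc1 : CondC1 X (fun n x => f n x / g n x) := by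
    refine ⟨Cf + Cg, by linarith, ?_⟩
    intro n m hn hm x hx
    have hyX : shift^[n] x ∈ X := iter_mem' hX n hx
    set y := shift^[n] x with hy
    have hfn := hfpos n hn x hx
    have hfm := hfpos m hm y hyX
    have hgn := hgpos n hn x hx
    have hgm := hgpos m hm y hyX
    have h1 := hCfsub n m hn hm x hx
    have h2 := (hCgA n m hn hm x hx).1
    show f (n+m) x / g (n+m) x ≤ Real.exp (Cf+Cg) * (f n x / g n x * (f m y / g m y))
    calc f (n+m) x / g (n+m) x
        ≤ (Real.exp Cf * (f n x * f m y)) / (Real.exp (-Cg) * (g n x * g m y)) :=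
          div_le_div₀ (mul_nonneg (Real.exp_pos Cf).le (mul_nonneg hfn.le hfm.le)) h1
            (mul_pos (Real.exp_pos _) (mul_pos hgn hgm)) h2
      _ = Real.exp (Cf+Cg) * (f n x / g n x * (f m y / g m y)) := by
          rw [Real.exp_add, Real.exp_neg]
          field_simp [hgn.ne', hgm.ne']
  -- the modified variation constants
  set M : ℕ → ℝ := fun n => max (Ms n) 1 with hMdef
  have hMpos : ∀ n, 0 < M n := fun n => lt_of_lt_of_le one_pos (le_max_right _ _)
  have hMone : ∀ n, 1 ≤ M n := fun n => le_max_right _ _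
  have hMvar' : ∀ (t : List ℕ), 0 < t.length → ∀ x, x ∈ X → x ∈ cyl t → ∀ y, y ∈ X → y ∈ cyl t →
      g t.length x ≤ M t.length * g t.length y := by
    intro t ht x hxX hxC y hyX hyC
    have h1 := (hMvar t.length ht).2 x hxX y hyX (cyl_agree' hxC hyC)
    have h2 := hgpos t.length ht y hyX
    calc g t.length x ≤ Ms t.length * g t.length y := h1
      _ ≤ M t.length * g t.length y := mul_le_mul_of_nonneg_right (le_max_left _ _) h2.le
  -- the finite constant K bounding g over the cylinders of connecting words
  set B : List ℕ → ℝ := fun w =>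
    if hw : Allow X w then M w.length * g w.length hw.choose else 1 with hBdef
  set K : ℝ := 1 + ∑ w ∈ W, |B w| with hKdef
  have hK1 : 1 ≤ K := by
    have h0 : 0 ≤ ∑ w ∈ W, |B w| := Finset.sum_nonneg fun _ _ => abs_nonneg _
    rw [hKdef]; linarith
  have hKpos : 0 < K := by linarith
  have hKB : ∀ w ∈ W, B w ≤ K := by
    intro w hw
    have h1 : |B w| ≤ ∑ w ∈ W, |B w| :=
      Finset.single_le_sum (f := fun w => |B w|) (fun _ _ => abs_nonneg _) hw
    calc B w ≤ |B w| := le_abs_self _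
      _ ≤ K := by rw [hKdef]; linarith
  have hBbound : ∀ w : List ℕ, 0 < w.length → ∀ hw : Allow X w, ∀ z, z ∈ X → z ∈ cyl w →
      g w.length z ≤ B w ∧ g w.length hw.choose / M w.length ≤ g w.length z := by
    intro w hwl hw z hzX hzC
    obtain ⟨hcX, hcC⟩ := hw.choose_spec
    constructor
    · have h1 := hMvar' w hwl z hzX hzC _ hcX hcC
      rw [hBdef]; simp only [dif_pos hw]
      exact h1
    · have h2 := hMvar' w hwl _ hcX hcC z hzX hzC
      rw [div_le_iff₀ (hMpos _), mul_comm]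
      linarith
  -- tempered behaviour of log (M n) / n
  have hLg : Tendsto (fun n : ℕ => Real.log (M n) / n) atTop (𝓝 0) := by
    have hbound : ∀ n : ℕ, ‖Real.log (M n) / n‖ ≤ ‖Real.log (Ms n) / n‖ := by
      intro n
      rcases le_or_gt (Ms n) 1 with hc | hc
      · have hM1 : M n = 1 := by rw [hMdef]; exact max_eq_right hc
        rw [hM1]
        simp only [Real.log_one, zero_div, norm_zero, Real.norm_eq_abs]
        positivity
      · have hM1 : M n = Ms n := by rw [hMdef]; exact max_eq_left hc.le
        rw [hM1]
    exact squeeze_zero_norm hbound (by simpa using hMlim.norm)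
  -- part 3 : condition (D3) for the quotient
  have hEK1 : 1 ≤ Real.exp Cg * K := by
    have := Real.one_le_exp hCg0
    nlinarith
  have hc3 : CondD3 X (fun n x => f n x / g n x) := by
    refine ⟨fun n m => D n m / (Real.exp (2*Cg) * K * (M n ^ 2 * M m ^ 2)), p, W,
      ⟨⟨?_, ?_, ?_⟩, hWlen, ?_⟩⟩
    · intro n m
      exact div_pos (hDpos n m) (mul_pos (mul_pos (Real.exp_pos _) hKpos)
        (mul_pos (pow_pos (hMpos n) 2) (pow_pos (hMpos m) 2)))
    · -- tendsto in n
      intro m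
      have hlog : ∀ n : ℕ, Real.log (D n m / (Real.exp (2*Cg) * K * (M n ^ 2 * M m ^ 2))) / n
          = Real.log (D n m) / n - Real.log (Real.exp (2*Cg) * K) / n
            - 2 * (Real.log (M n) / n) - 2 * (Real.log (M m) / n) := by
        intro n
        have hMM : (0:ℝ) < M n ^ 2 * M m ^ 2 :=
          mul_pos (pow_pos (hMpos n) 2) (pow_pos (hMpos m) 2)
        have hEK : (0:ℝ) < Real.exp (2*Cg) * K := mul_pos (Real.exp_pos _) hKpos
        rw [Real.log_div (hDpos n m).ne' (mul_pos hEK hMM).ne',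
          Real.log_mul hEK.ne' hMM.ne',
          Real.log_mul (Real.exp_pos _).ne' hKpos.ne',
          Real.log_mul (pow_pos (hMpos n) 2).ne' (pow_pos (hMpos m) 2).ne',
          Real.log_exp, Real.log_pow, Real.log_pow]
        push_cast
        ring
      simp only [hlog]
      have t1 := hDn m
      have t2 := tendsto_const_div_atTop_nhds_zero_nat (Real.log (Real.exp (2*Cg) * K))
      have t3 := hLg.const_mul 2
      have t4 := (tendsto_const_div_atTop_nhds_zero_nat (Real.log (M m))).const_mul 2
      simpa using ((t1.sub t2).sub t3).sub t4
    · -- tendsto in m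
      intro n
      have hlog : ∀ m : ℕ, Real.log (D n m / (Real.exp (2*Cg) * K * (M n ^ 2 * M m ^ 2))) / m
          = Real.log (D n m) / m - Real.log (Real.exp (2*Cg) * K) / m
            - 2 * (Real.log (M n) / m) - 2 * (Real.log (M m) / m) := by
        intro m
        have hMM : (0:ℝ) < M n ^ 2 * M m ^ 2 :=
          mul_pos (pow_pos (hMpos n) 2) (pow_pos (hMpos m) 2)
        have hEK : (0:ℝ) < Real.exp (2*Cg) * K := mul_pos (Real.exp_pos _) hKpos
        rw [Real.log_div (hDpos n m).ne' (mul_pos hEK hMM).ne',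
          Real.log_mul hEK.ne' hMM.ne',
          Real.log_mul (Real.exp_pos _).ne' hKpos.ne',
          Real.log_mul (pow_pos (hMpos n) 2).ne' (pow_pos (hMpos m) 2).ne',
          Real.log_exp, Real.log_pow, Real.log_pow]
        push_cast
        ring
      simp only [hlog]
      have t1 := hDm n
      have t2 := tendsto_const_div_atTop_nhds_zero_nat (Real.log (Real.exp (2*Cg) * K))
      have t3 := (tendsto_const_div_atTop_nhds_zero_nat (Real.log (M n))).const_mul 2
      have t4 := hLg.const_mul 2
      simpa using ((t1.sub t2).sub t3).sub t4
    · -- the main inequality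
      intro u v hu hv hAu hAv
      obtain ⟨w, hwW, hAS, hineq⟩ := hmain u v hu hv hAu hAv
      refine ⟨w, hwW, hAS, ?_⟩
      obtain ⟨yu, hyuX, hyuC⟩ := hAu
      obtain ⟨yv, hyvX, hyvC⟩ := hAv
      obtain ⟨z0, hz0X, hz0C⟩ := hAS
      have hsplit : ∀ z : FullShift, z ∈ cyl (u ++ w ++ v) →
          z ∈ cyl u ∧ shift^[u.length] z ∈ cyl w ∧ shift^[u.length + w.length] z ∈ cyl v := by
        intro z hz
        have h1 : z ∈ cyl (u ++ w) := cyl_append_left' hz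
        have h2 := cyl_append_right' hz
        refine ⟨cyl_append_left' h1, cyl_append_right' h1, ?_⟩
        simpa [List.length_append] using h2
      have hNpos : 0 < (u ++ w ++ v).length := by
        simp only [List.length_append]; omega
      have hNeq : (u ++ w ++ v).length = u.length + (w.length + v.length) := by
        simp only [List.length_append]; omega
      simp only [supW] at hineq ⊢
      set Su := X ∩ cyl u with hSu
      set Sv := X ∩ cyl v with hSv
      set SS := X ∩ cyl (u ++ w ++ v) with hSS
      have hz0S : z0 ∈ SS := ⟨hz0X, hz0C⟩
      have hsupnn : ∀ t : List ℕ, 0 < t.length → ∀ x0, x0 ∈ X → x0 ∈ cyl t →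
          0 ≤ sSup ((fun x => f t.length x / g t.length x) '' (X ∩ cyl t)) := by
        intro t ht x0 hx0X hx0C
        by_cases hb : BddAbove ((fun x => f t.length x / g t.length x) '' (X ∩ cyl t))
        · have h0 : 0 ≤ f t.length x0 / g t.length x0 :=
            div_nonneg (hfpos _ ht _ hx0X).le (hgpos _ ht _ hx0X).le
          exact le_trans h0 (le_csSup hb ⟨x0, ⟨hx0X, hx0C⟩, rfl⟩)
        · rw [Real.sSup_of_not_bddAbove hb]
      by_cases hbu : BddAbove ((fun x => f u.length x / g u.length x) '' Su)
      swap
      · rw [Real.sSup_of_not_bddAbove hbu, zero_mul, mul_zero]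
        exact hsupnn _ hNpos z0 hz0X hz0C
      by_cases hbv : BddAbove ((fun x => f v.length x / g v.length x) '' Sv)
      swap
      · rw [Real.sSup_of_not_bddAbove hbv, mul_zero, mul_zero]
        exact hsupnn _ hNpos z0 hz0X hz0C
      -- the main case
      have hfyu := hfpos u.length hu yu hyuX
      have hgyu := hgpos u.length hu yu hyuX
      have hfyv := hfpos v.length hv yv hyvX
      have hgyv := hgpos v.length hv yv hyvX
      have hfz0 := hfpos _ hNpos z0 hz0X
      have hgz0 := hgpos _ hNpos z0 hz0X
      have hshu_pos : 0 < sSup ((fun x => f u.length x / g u.length x) '' Su) :=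
        lt_of_lt_of_le (div_pos hfyu hgyu) (le_csSup hbu ⟨yu, ⟨hyuX, hyuC⟩, rfl⟩)
      have hshv_pos : 0 < sSup ((fun x => f v.length x / g v.length x) '' Sv) :=
        lt_of_lt_of_le (div_pos hfyv hgyv) (le_csSup hbv ⟨yv, ⟨hyvX, hyvC⟩, rfl⟩)
      -- f is bounded on the u- and v-cylinders
      have hbfu : BddAbove ((fun x => f u.length x) '' Su) := by
        refine ⟨sSup ((fun x => f u.length x / g u.length x) '' Su)
          * (M u.length * g u.length yu), ?_⟩
        rintro r ⟨z, ⟨hzX, hzC⟩, rfl⟩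
        have h1 : f u.length z / g u.length z
            ≤ sSup ((fun x => f u.length x / g u.length x) '' Su) :=
          le_csSup hbu ⟨z, ⟨hzX, hzC⟩, rfl⟩
        have h2 := hMvar' u hu z hzX hzC yu hyuX hyuC
        have hgz := hgpos u.length hu z hzX
        calc f u.length z = (f u.length z / g u.length z) * g u.length z :=
              (div_mul_cancel₀ _ hgz.ne').symm
          _ ≤ _ := mul_le_mul h1 h2 hgz.le hshu_pos.le
      have hbfv : BddAbove ((fun x => f v.length x) '' Sv) := by
        refine ⟨sSup ((fun x => f v.length x / g v.length x) '' Sv)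
          * (M v.length * g v.length yv), ?_⟩
        rintro r ⟨z, ⟨hzX, hzC⟩, rfl⟩
        have h1 : f v.length z / g v.length z
            ≤ sSup ((fun x => f v.length x / g v.length x) '' Sv) :=
          le_csSup hbv ⟨z, ⟨hzX, hzC⟩, rfl⟩
        have h2 := hMvar' v hv z hzX hzC yv hyvX hyvC
        have hgz := hgpos v.length hv z hzX
        calc f v.length z = (f v.length z / g v.length z) * g v.length z :=
              (div_mul_cancel₀ _ hgz.ne').symm
          _ ≤ _ := mul_le_mul h1 h2 hgz.le hshv_pos.le
      have hsfu_pos : 0 < sSup ((fun x => f u.length x) '' Su) :=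
        lt_of_lt_of_le hfyu (le_csSup hbfu ⟨yu, ⟨hyuX, hyuC⟩, rfl⟩)
      have hsfv_pos : 0 < sSup ((fun x => f v.length x) '' Sv) :=
        lt_of_lt_of_le hfyv (le_csSup hbfv ⟨yv, ⟨hyvX, hyvC⟩, rfl⟩)
      -- f is bounded on the big cylinder
      have hbfS : BddAbove ((fun x => f (u ++ w ++ v).length x) '' SS) := by
        by_contra hb
        rw [Real.sSup_of_not_bddAbove hb] at hineq
        exact lt_irrefl (0:ℝ)
          (lt_of_lt_of_le (mul_pos (hDpos _ _) (mul_pos hsfu_pos hsfv_pos)) hineq)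
      -- key comparison on the u- and v- cylinders
      have hau_pos : 0 < g u.length yu / M u.length := div_pos hgyu (hMpos _)
      have hav_pos : 0 < g v.length yv / M v.length := div_pos hgyv (hMpos _)
      have key_u : g u.length yu / M u.length * sSup ((fun x => f u.length x / g u.length x) '' Su)
          ≤ sSup ((fun x => f u.length x) '' Su) := by
        have hle : sSup ((fun x => f u.length x / g u.length x) '' Su)
            ≤ sSup ((fun x => f u.length x) '' Su) / (g u.length yu / M u.length) := by
          apply csSup_le ⟨_, Set.mem_image_of_mem _ (show yu ∈ Su from ⟨hyuX, hyuC⟩)⟩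
          rintro r ⟨z, ⟨hzX, hzC⟩, rfl⟩
          have hfz := hfpos u.length hu z hzX
          have hgz := hgpos u.length hu z hzX
          have hlow : g u.length yu / M u.length ≤ g u.length z := by
            rw [div_le_iff₀ (hMpos _), mul_comm]
            exact hMvar' u hu yu hyuX hyuC z hzX hzC
          have h2 : f u.length z ≤ sSup ((fun x => f u.length x) '' Su) :=
            le_csSup hbfu ⟨z, ⟨hzX, hzC⟩, rfl⟩
          exact div_le_div₀ (le_trans hfz.le h2) h2 hau_pos hlow
        rw [mul_comm]
        exact (le_div_iff₀ hau_pos).1 hle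
      have key_v : g v.length yv / M v.length * sSup ((fun x => f v.length x / g v.length x) '' Sv)
          ≤ sSup ((fun x => f v.length x) '' Sv) := by
        have hle : sSup ((fun x => f v.length x / g v.length x) '' Sv)
            ≤ sSup ((fun x => f v.length x) '' Sv) / (g v.length yv / M v.length) := by
          apply csSup_le ⟨_, Set.mem_image_of_mem _ (show yv ∈ Sv from ⟨hyvX, hyvC⟩)⟩
          rintro r ⟨z, ⟨hzX, hzC⟩, rfl⟩
          have hfz := hfpos v.length hv z hzX
          have hgz := hgpos v.length hv z hzX
          have hlow : g v.length yv / M v.length ≤ g v.length z := by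
            rw [div_le_iff₀ (hMpos _), mul_comm]
            exact hMvar' v hv yv hyvX hyvC z hzX hzC
          have h2 : f v.length z ≤ sSup ((fun x => f v.length x) '' Sv) :=
            le_csSup hbfv ⟨z, ⟨hzX, hzC⟩, rfl⟩
          exact div_le_div₀ (le_trans hfz.le h2) h2 hav_pos hlow
        rw [mul_comm]
        exact (le_div_iff₀ hav_pos).1 hle
      -- upper bound for g on the big cylinder
      set bu : ℝ := M u.length * g u.length yu with hbudef
      set bv : ℝ := M v.length * g v.length yv with hbvdef
      have hbu_pos : 0 < bu := mul_pos (hMpos _) hgyu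
      have hbv_pos : 0 < bv := mul_pos (hMpos _) hgyv
      set β : ℝ := Real.exp Cg * (bu * (Real.exp Cg * (K * bv))) with hβdef
      have hβpos : 0 < β := by
        rw [hβdef]
        exact mul_pos (Real.exp_pos _) (mul_pos hbu_pos
          (mul_pos (Real.exp_pos _) (mul_pos hKpos hbv_pos)))
      have hgS_ub : ∀ z, z ∈ SS → g (u ++ w ++ v).length z ≤ β := by
        rintro z ⟨hzX, hzC⟩
        obtain ⟨hzu, hzw, hzv⟩ := hsplit z hzC
        have hznX : shift^[u.length] z ∈ X := iter_mem' hX _ hzX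
        have hznkX : shift^[u.length + w.length] z ∈ X := iter_mem' hX _ hzX
        rcases Nat.eq_zero_or_pos w.length with hk0 | hk
        · -- empty connecting word
          have hNeq' : (u ++ w ++ v).length = u.length + v.length := by
            simp [List.length_append, hk0]
          have hzv' : shift^[u.length] z ∈ cyl v := by
            rw [show u.length = u.length + w.length by omega]
            exact hzv
          have step := (hCgA u.length v.length hu hv z hzX).2
          have hb1 : g u.length z ≤ bu := hMvar' u hu z hzX hzu yu hyuX hyuC
          have hb3 : g v.length (shift^[u.length] z) ≤ bv :=
            hMvar' v hv _ hznX hzv' yv hyvX hyvC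
          have hgn := hgpos u.length hu z hzX
          have hgm := hgpos v.length hv _ hznX
          rw [hNeq']
          calc g (u.length + v.length) z
              ≤ Real.exp Cg * (g u.length z * g v.length (shift^[u.length] z)) := step
            _ ≤ Real.exp Cg * (bu * bv) := by
                apply mul_le_mul_of_nonneg_left _ (Real.exp_pos Cg).le
                exact mul_le_mul hb1 hb3 hgm.le hbu_pos.le
            _ ≤ β := by
                rw [hβdef]
                have h5 : 0 ≤ bu * bv := (mul_pos hbu_pos hbv_pos).le
                nlinarith [mul_nonneg h5 (sub_nonneg.2 hEK1), Real.exp_pos Cg]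
        · -- nonempty connecting word
          have haw : Allow X w := ⟨shift^[u.length] z0, iter_mem' hX _ hz0X,
            (hsplit z0 hz0C).2.1⟩
          have hcomp : shift^[w.length] (shift^[u.length] z) = shift^[u.length + w.length] z := by
            rw [add_comm u.length w.length]
            exact (Function.iterate_add_apply _ _ _ _).symm
          have step1 := (hCgA u.length (w.length + v.length) hu (by omega) z hzX).2
          have step2 := (hCgA w.length v.length hk hv _ hznX).2
          rw [hcomp] at step2
          have hb1 : g u.length z ≤ bu := hMvar' u hu z hzX hzu yu hyuX hyuC
          have hb2 : g w.length (shift^[u.length] z) ≤ K :=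
            le_trans ((hBbound w hk haw _ hznX hzw).1) (hKB w hwW)
          have hb3 : g v.length (shift^[u.length + w.length] z) ≤ bv :=
            hMvar' v hv _ hznkX hzv yv hyvX hyvC
          have hgn := hgpos u.length hu z hzX
          have hgk := hgpos w.length hk _ hznX
          have hgm := hgpos v.length hv _ hznkX
          rw [hNeq]
          calc g (u.length + (w.length + v.length)) z
              ≤ Real.exp Cg * (g u.length z * g (w.length + v.length) (shift^[u.length] z)) :=
                step1
            _ ≤ Real.exp Cg * (g u.length z * (Real.exp Cg
                * (g w.length (shift^[u.length] z) * g v.length (shift^[u.length + w.length] z)))) := by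
                apply mul_le_mul_of_nonneg_left _ (Real.exp_pos Cg).le
                exact mul_le_mul_of_nonneg_left step2 hgn.le
            _ ≤ β := by
                rw [hβdef]
                apply mul_le_mul_of_nonneg_left _ (Real.exp_pos Cg).le
                have c1 : g w.length (shift^[u.length] z) * g v.length (shift^[u.length + w.length] z)
                    ≤ K * bv := mul_le_mul hb2 hb3 hgm.le hKpos.le
                exact mul_le_mul hb1 (mul_le_mul_of_nonneg_left c1 (Real.exp_pos Cg).le)
                  (mul_nonneg (Real.exp_pos Cg).le (mul_nonneg hgk.le hgm.le)) hbu_pos.le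
      -- lower bound for g on the big cylinder
      have hγ : ∃ γ : ℝ, 0 < γ ∧ ∀ z, z ∈ SS → γ ≤ g (u ++ w ++ v).length z := by
        rcases Nat.eq_zero_or_pos w.length with hk0 | hk
        · refine ⟨Real.exp (-Cg) * (g u.length yu / M u.length * (g v.length yv / M v.length)),
            mul_pos (Real.exp_pos _) (mul_pos hau_pos hav_pos), ?_⟩
          rintro z ⟨hzX, hzC⟩
          obtain ⟨hzu, hzw, hzv⟩ := hsplit z hzC
          have hznX : shift^[u.length] z ∈ X := iter_mem' hX _ hzX
          have hNeq' : (u ++ w ++ v).length = u.length + v.length := by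
            simp [List.length_append, hk0]
          have hzv' : shift^[u.length] z ∈ cyl v := by
            rw [show u.length = u.length + w.length by omega]
            exact hzv
          have step := (hCgA u.length v.length hu hv z hzX).1
          have hlow1 : g u.length yu / M u.length ≤ g u.length z := by
            rw [div_le_iff₀ (hMpos _), mul_comm]
            exact hMvar' u hu yu hyuX hyuC z hzX hzu
          have hlow3 : g v.length yv / M v.length ≤ g v.length (shift^[u.length] z) := by
            rw [div_le_iff₀ (hMpos _), mul_comm]
            exact hMvar' v hv yv hyvX hyvC _ hznX hzv'
          rw [hNeq']
          refine le_trans ?_ step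
          exact mul_le_mul_of_nonneg_left
            (mul_le_mul hlow1 hlow3 hav_pos.le (hgpos u.length hu z hzX).le)
            (Real.exp_pos (-Cg)).le
        · have haw : Allow X w := ⟨shift^[u.length] z0, iter_mem' hX _ hz0X,
            (hsplit z0 hz0C).2.1⟩
          obtain ⟨hcX, hcC⟩ := haw.choose_spec
          have hgcw := hgpos w.length hk _ hcX
          refine ⟨Real.exp (-Cg) * (g u.length yu / M u.length * (Real.exp (-Cg)
            * (g w.length haw.choose / M w.length * (g v.length yv / M v.length)))),
            mul_pos (Real.exp_pos _) (mul_pos hau_pos (mul_pos (Real.exp_pos _)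
              (mul_pos (div_pos hgcw (hMpos _)) hav_pos))), ?_⟩
          rintro z ⟨hzX, hzC⟩
          obtain ⟨hzu, hzw, hzv⟩ := hsplit z hzC
          have hznX : shift^[u.length] z ∈ X := iter_mem' hX _ hzX
          have hznkX : shift^[u.length + w.length] z ∈ X := iter_mem' hX _ hzX
          have hcomp : shift^[w.length] (shift^[u.length] z) = shift^[u.length + w.length] z := by
            rw [add_comm u.length w.length]
            exact (Function.iterate_add_apply _ _ _ _).symm
          have step1 := (hCgA u.length (w.length + v.length) hu (by omega) z hzX).1
          have step2 := (hCgA w.length v.length hk hv _ hznX).1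
          rw [hcomp] at step2
          have hlow1 : g u.length yu / M u.length ≤ g u.length z := by
            rw [div_le_iff₀ (hMpos _), mul_comm]
            exact hMvar' u hu yu hyuX hyuC z hzX hzu
          have hlow2 : g w.length haw.choose / M w.length ≤ g w.length (shift^[u.length] z) :=
            (hBbound w hk haw _ hznX hzw).2
          have hlow3 : g v.length yv / M v.length ≤ g v.length (shift^[u.length + w.length] z) := by
            rw [div_le_iff₀ (hMpos _), mul_comm]
            exact hMvar' v hv yv hyvX hyvC _ hznkX hzv
          have hgk := hgpos w.length hk _ hznX
          have hgm := hgpos v.length hv _ hznkX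
          rw [hNeq]
          refine le_trans ?_ step1
          apply mul_le_mul_of_nonneg_left _ (Real.exp_pos (-Cg)).le
          have c1 : Real.exp (-Cg) * (g w.length haw.choose / M w.length
              * (g v.length yv / M v.length))
              ≤ g (w.length + v.length) (shift^[u.length] z) := by
            refine le_trans ?_ step2
            apply mul_le_mul_of_nonneg_left _ (Real.exp_pos (-Cg)).le
            exact mul_le_mul hlow2 hlow3 hav_pos.le hgk.le
          exact mul_le_mul hlow1 c1
            (mul_pos (Real.exp_pos _) (mul_pos (div_pos hgcw (hMpos _)) hav_pos)).le
            (hgpos u.length hu z hzX).le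
      obtain ⟨γ, hγpos, hγlb⟩ := hγ
      -- the quotient is bounded on the big cylinder
      have hbhS : BddAbove ((fun x => f (u ++ w ++ v).length x / g (u ++ w ++ v).length x) '' SS) := by
        obtain ⟨R, hR⟩ := hbfS
        refine ⟨max R 0 / γ, ?_⟩
        rintro r ⟨z, hz, rfl⟩
        have h1 : f (u ++ w ++ v).length z ≤ R := hR ⟨z, hz, rfl⟩
        exact div_le_div₀ (le_max_right R 0) (le_trans h1 (le_max_left _ _)) hγpos (hγlb z hz)
      have hshS_pos : 0 < sSup ((fun x => f (u ++ w ++ v).length x / g (u ++ w ++ v).length x) '' SS) :=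
        lt_of_lt_of_le (div_pos hfz0 hgz0) (le_csSup hbhS ⟨z0, hz0S, rfl⟩)
      -- transfer the sup inequality
      have h4 : sSup ((fun x => f (u ++ w ++ v).length x) '' SS)
          ≤ β * sSup ((fun x => f (u ++ w ++ v).length x / g (u ++ w ++ v).length x) '' SS) := by
        apply csSup_le ⟨_, Set.mem_image_of_mem _ hz0S⟩
        rintro r ⟨z, hz, rfl⟩
        have hzX := hz.1
        have hgz := hgpos _ hNpos z hzX
        have h1 : f (u ++ w ++ v).length z / g (u ++ w ++ v).length z
            ≤ sSup ((fun x => f (u ++ w ++ v).length x / g (u ++ w ++ v).length x) '' SS) :=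
          le_csSup hbhS ⟨z, hz, rfl⟩
        calc f (u ++ w ++ v).length z
            = (f (u ++ w ++ v).length z / g (u ++ w ++ v).length z) * g (u ++ w ++ v).length z :=
              (div_mul_cancel₀ _ hgz.ne').symm
          _ ≤ sSup ((fun x => f (u ++ w ++ v).length x / g (u ++ w ++ v).length x) '' SS) * β :=
              mul_le_mul h1 (hgS_ub z hz) hgz.le hshS_pos.le
          _ = _ := mul_comm _ _
      -- final algebra
      have heq : D u.length v.length / (Real.exp (2*Cg) * K * (M u.length ^ 2 * M v.length ^ 2))
          * (sSup ((fun x => f u.length x / g u.length x) '' Su)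
            * sSup ((fun x => f v.length x / g v.length x) '' Sv))
          = D u.length v.length
            * ((g u.length yu / M u.length * sSup ((fun x => f u.length x / g u.length x) '' Su))
              * (g v.length yv / M v.length * sSup ((fun x => f v.length x / g v.length x) '' Sv)))
            / β := by
        rw [hβdef, hbudef, hbvdef, two_mul, Real.exp_add]
        field_simp [hgyu.ne', hgyv.ne', (hMpos u.length).ne', (hMpos v.length).ne',
          hKpos.ne', (Real.exp_pos Cg).ne']
      rw [heq, div_le_iff₀ hβpos]
      calc D u.length v.length
          * ((g u.length yu / M u.length * sSup ((fun x => f u.length x / g u.length x) '' Su))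
            * (g v.length yv / M v.length * sSup ((fun x => f v.length x / g v.length x) '' Sv)))
          ≤ D u.length v.length * (sSup ((fun x => f u.length x) '' Su)
            * sSup ((fun x => f v.length x) '' Sv)) := by
            apply mul_le_mul_of_nonneg_left _ (hDpos _ _).le
            exact mul_le_mul key_u key_v
              (mul_nonneg hav_pos.le hshv_pos.le) hsfu_pos.le
        _ ≤ sSup ((fun x => f (u ++ w ++ v).length x) '' SS) := hineq
        _ ≤ β * sSup ((fun x => f (u ++ w ++ v).length x / g (u ++ w ++ v).length x) '' SS) := h4
        _ = sSup ((fun x => f (u ++ w ++ v).length x / g (u ++ w ++ v).length x) '' SS) * β :=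
            mul_comm _ _
  refine ⟨hc1, ?_, hc3⟩
  obtain ⟨Dnm, p', W', hT, hlen, hm2⟩ := hc3
  refine ⟨Dnm, p', hT, ?_⟩
  intro u v hu hv hAu hAv
  obtain ⟨w, hwW, hrest⟩ := hm2 u v hu hv hAu hAv
  exact ⟨w, hlen w hwW, hrest⟩

end CSS
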